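/- In the monitoring game, assume p_a = p_b = p with 1/3 < p < 1/2 (so p_c = 1 − 2p) and (1 − 2p)/(1 − p) < ν* < p/(1 − p), and let ζ satisfy p < ζ < 1 − p. Consider the distribution λ over two-class partitions of {a,b,c} given by λ({{a,c},{b}}) = μ* and λ({{b,c},{a}}) = 1 − μ*; the employer's strategy for each partition in the support: control every type in the class containing a and not control every type in the class containing b; and the worker: type c plays e = 0 with probability ζ (so e₁(c) = 1 − ζ). Then this profile is a locally clustered distributional analogy-based expectation equilibrium: the aggregate control probability faced by type c equals μ* (so any ζ is a worker best response), the employer's actions are best responses to the consistent expectations β₁ for each partition in the support, and each partition in the support of λ is locally clustered with respect to the worker's behavior: (e₁(ω) − β₁(α))² ≤ (e₁(ω) − β₁(α'))² for all classes α, α' of that partition and all ω ∈ α. -/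

import Mathlib

/-- The three worker types of the monitoring game. -/
inductive Typ : Type
  | a | b | c
  deriving DecidableEq

instance : Fintype Typ where
  elems := {Typ.a, Typ.b, Typ.c}
  complete := by intro x; cases x <;> simp

/-- Probabilities of the worker types. -/
noncomputable def pmap (pa pb pc : ℝ) : Typ → ℝ
  | .a => pa
  | .b => pb
  | .c => pc

/-- Probability of high effort of each worker type, when type `c` chooses low effort
with probability `ζ`. -/
noncomputable def emap (ζ : ℝ) : Typ → ℝ
  | .a => 0
  | .b => 1
  | .c => 1 - ζ

/-- The analogy class (fiber) of type `ω` under the two-class partition encoded by `g`. -/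
def cls (g : Typ → Bool) (ω : Typ) : Finset Typ :=
  Finset.univ.filter fun ω' => g ω' = g ω

/-- The employer's analogy-based expectation of high effort on the class `α`. -/
noncomputable def beta1 (p e : Typ → ℝ) (α : Finset Typ) : ℝ :=
  (∑ ω ∈ α, p ω * e ω) / ∑ ω ∈ α, p ω

/-- The partition `{{a,c},{b}}`: `a, c ↦ true`, `b ↦ false`. -/
def gac : Typ → Bool
  | .b => false
  | _ => true

/-- The partition `{{b,c},{a}}`: `b, c ↦ true`, `a ↦ false`. -/
def gbc : Typ → Bool
  | .a => false
  | _ => true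

/-- Employer control probabilities under partition `{{a,c},{b}}`:
control the class containing `a`, do not control the class containing `b`. -/
noncomputable def mac : Typ → ℝ
  | .b => 0
  | _ => 1

/-- Employer control probabilities under partition `{{b,c},{a}}`:
control the class containing `a`, do not control the class containing `b`. -/
noncomputable def mbc : Typ → ℝ
  | .a => 1
  | _ => 0

/-- The partition `g` is locally clustered with respect to worker behavior `e`. -/
def LocallyClustered (p e : Typ → ℝ) (g : Typ → Bool) : Prop :=
  ∀ ω ω' : Typ,
    (e ω - beta1 p e (cls g ω)) ^ 2 ≤ (e ω - beta1 p e (cls g ω')) ^ 2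

/-!
In the partition `{{a,c},{b}}` the pooled class `{a,c}` has mean effort `(1-2p)(1-ζ)/(1-p)`, in
`{{b,c},{a}}` the pooled class `{b,c}` has mean `(p + (1-2p)(1-ζ))/(1-p)`; the bounds on `ν*` put
the first below and the second above the cutoff, so controlling exactly the class of `a` is a best
response in both. A type is closer to the mean of its own class than to the other one iff it lies on
the right side of the midpoint of the two means, and for type `c` this is exactly `p ≤ ζ` in the
first partition and `ζ ≤ 1 - p` in the second. Type `c` is controlled in the first partition only,
so it faces control probability `μ*` and is indifferent.
-/

lemma sq_sub_le_sq_sub_of_two_mul_le_add {x m m' : ℝ} (hm : m ≤ m') (hx : 2 * x ≤ m + m') :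
    (x - m) ^ 2 ≤ (x - m') ^ 2 := by
  nlinarith [mul_nonneg (sub_nonneg.2 hm) (sub_nonneg.2 hx)]

lemma sq_sub_le_sq_sub_of_add_le_two_mul {x m m' : ℝ} (hm : m' ≤ m) (hx : m + m' ≤ 2 * x) :
    (x - m) ^ 2 ≤ (x - m') ^ 2 := by
  nlinarith [mul_nonneg (sub_nonneg.2 hm) (sub_nonneg.2 hx)]

lemma beta1_pair (q e : Typ → ℝ) {s t : Typ} (hst : s ≠ t) :
    beta1 q e {s, t} = (q s * e s + q t * e t) / (q s + q t) := by
  rw [beta1, Finset.sum_pair hst, Finset.sum_pair hst]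

lemma beta1_singleton (q e : Typ → ℝ) {t : Typ} (ht : q t ≠ 0) : beta1 q e {t} = e t := by
  rw [beta1, Finset.sum_singleton, Finset.sum_singleton, mul_div_cancel_left₀ _ ht]

lemma cls_eq_of_eq {g : Typ → Bool} {ω ω' : Typ} (h : g ω = g ω') : cls g ω = cls g ω' := by
  rw [cls, cls, h]

lemma locallyClustered_of_closer_to_own_mean {q e : Typ → ℝ} {g : Typ → Bool} (m : Bool → ℝ)
    (hm : ∀ ω, beta1 q e (cls g ω) = m (g ω))
    (hcloser : ∀ ω, (e ω - m (g ω)) ^ 2 ≤ (e ω - m (!g ω)) ^ 2) :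
    LocallyClustered q e g := by
  intro ω ω'
  by_cases h : g ω = g ω'
  · rw [cls_eq_of_eq h]
  · rw [hm, hm, Bool.eq_not_of_ne (Ne.symm h)]
    exact hcloser ω

def IsControlBestResponse (ν β m : ℝ) : Prop :=
  (β < ν ∧ m = 1) ∨ (ν < β ∧ m = 0)

section MonitoringGame

variable {p ζ ν : ℝ}

lemma cls_gac (ω : Typ) : cls gac ω = bif gac ω then {.a, .c} else {.b} := by
  cases ω <;> decide

lemma cls_gbc (ω : Typ) : cls gbc ω = bif gbc ω then {.b, .c} else {.a} := by
  cases ω <;> decide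

lemma beta1_cls_gac (hp : p ≠ 0) (ω : Typ) :
    beta1 (pmap p p (1 - 2 * p)) (emap ζ) (cls gac ω) =
      bif gac ω then (1 - 2 * p) * (1 - ζ) / (1 - p) else 1 := by
  rw [cls_gac]
  cases gac ω
  · exact beta1_singleton _ _ hp
  · rw [cond_true, cond_true, beta1_pair _ _ (by decide)]
    simp only [pmap, emap]
    congr 1 <;> ring

lemma beta1_cls_gbc (ω : Typ) :
    beta1 (pmap p p (1 - 2 * p)) (emap ζ) (cls gbc ω) =
      bif gbc ω then (p + (1 - 2 * p) * (1 - ζ)) / (1 - p) else 0 := by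
  rw [cls_gbc]
  cases gbc ω
  · simp [beta1, pmap, emap]
  · rw [cond_true, cond_true, beta1_pair _ _ (by decide)]
    simp only [pmap, emap]
    congr 1 <;> ring

lemma isControlBestResponse_gac (hp0 : 0 < p) (hp : p < 1 / 2) (hζ : 0 ≤ ζ)
    (hν_lo : (1 - 2 * p) / (1 - p) < ν) (hν_hi : ν < p / (1 - p)) (ω : Typ) :
    IsControlBestResponse ν (beta1 (pmap p p (1 - 2 * p)) (emap ζ) (cls gac ω)) (mac ω) := by
  have hq : 0 < 1 - p := by linarith
  have hac : (1 - 2 * p) * (1 - ζ) / (1 - p) < ν :=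
    (div_le_div_of_nonneg_right (by nlinarith) hq.le).trans_lt hν_lo
  have hb : ν < 1 := hν_hi.trans ((div_lt_one hq).2 (by linarith))
  rw [IsControlBestResponse, beta1_cls_gac hp0.ne']
  cases ω
  exacts [.inl ⟨hac, rfl⟩, .inr ⟨hb, rfl⟩, .inl ⟨hac, rfl⟩]

lemma isControlBestResponse_gbc (hp : p < 1 / 2) (hζ : ζ ≤ 1)
    (hν_lo : (1 - 2 * p) / (1 - p) < ν) (hν_hi : ν < p / (1 - p)) (ω : Typ) :
    IsControlBestResponse ν (beta1 (pmap p p (1 - 2 * p)) (emap ζ) (cls gbc ω)) (mbc ω) := by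
  have hq : 0 < 1 - p := by linarith
  have ha : 0 < ν := (div_pos (by linarith) hq).trans hν_lo
  have hbc : ν < (p + (1 - 2 * p) * (1 - ζ)) / (1 - p) :=
    hν_hi.trans_le (div_le_div_of_nonneg_right (by nlinarith) hq.le)
  rw [IsControlBestResponse, beta1_cls_gbc]
  cases ω
  exacts [.inl ⟨ha, rfl⟩, .inr ⟨hbc, rfl⟩, .inr ⟨hbc, rfl⟩]

lemma locallyClustered_gac (hp0 : 0 < p) (hp : p < 1 / 2) (hpζ : p ≤ ζ) (hζ : ζ ≤ 1) :
    LocallyClustered (pmap p p (1 - 2 * p)) (emap ζ) gac := by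
  have hq : 0 < 1 - p := by linarith
  set β := (1 - 2 * p) * (1 - ζ) / (1 - p) with hβ
  have hβ0 : 0 ≤ β := div_nonneg (mul_nonneg (by linarith) (by linarith)) hq.le
  have hβ1 : β ≤ 1 := (div_le_one₀ hq).2 (by nlinarith)
  have hc : 2 * (1 - ζ) ≤ β + 1 := by
    rw [hβ, div_add_one hq.ne', le_div_iff₀ hq]
    nlinarith
  refine locallyClustered_of_closer_to_own_mean (fun b => bif b then β else 1)
    (beta1_cls_gac hp0.ne') fun ω => ?_
  cases ω <;> dsimp only [emap, gac, Bool.not, cond]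
  exacts [sq_sub_le_sq_sub_of_two_mul_le_add hβ1 (by linarith),
    sq_sub_le_sq_sub_of_add_le_two_mul hβ1 (by linarith),
    sq_sub_le_sq_sub_of_two_mul_le_add hβ1 hc]

lemma locallyClustered_gbc (hp0 : 0 < p) (hp : p < 1 / 2) (hζ0 : 0 ≤ ζ) (hζ : ζ ≤ 1 - p) :
    LocallyClustered (pmap p p (1 - 2 * p)) (emap ζ) gbc := by
  have hq : 0 < 1 - p := by linarith
  set β := (p + (1 - 2 * p) * (1 - ζ)) / (1 - p) with hβ
  have hβ0 : 0 ≤ β := div_nonneg (by nlinarith) hq.le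
  have hc : β ≤ 2 * (1 - ζ) := by
    rw [hβ, div_le_iff₀ hq]
    nlinarith
  refine locallyClustered_of_closer_to_own_mean (fun b => bif b then β else 0)
    beta1_cls_gbc fun ω => ?_
  cases ω <;> dsimp only [emap, gbc, Bool.not, cond]
  exacts [sq_sub_le_sq_sub_of_two_mul_le_add hβ0 (by linarith),
    sq_sub_le_sq_sub_of_add_le_two_mul hβ0 (by linarith),
    sq_sub_le_sq_sub_of_add_le_two_mul hβ0 (by linarith)]

end MonitoringGame

theorem monitoring_locally_clustered_distributional_ABEE_general
    (p : ℝ) (hp1 : 1 / 3 < p) (hp2 : p < 1 / 2)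
    (μs νs : ℝ)
    (hν_lo : (1 - 2 * p) / (1 - p) < νs) (hν_hi : νs < p / (1 - p))
    (ζ : ℝ) (hζlo : p < ζ) (hζhi : ζ < 1 - p) :
    -- aggregate control probability faced by type c equals μ*
    (μs * mac Typ.c + (1 - μs) * mbc Typ.c = μs) ∧
    -- employer best responses under partition {{a,c},{b}}
    (∀ ω, (beta1 (pmap p p (1 - 2 * p)) (emap ζ) (cls gac ω) < νs ∧ mac ω = 1) ∨
          (νs < beta1 (pmap p p (1 - 2 * p)) (emap ζ) (cls gac ω) ∧ mac ω = 0)) ∧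
    -- employer best responses under partition {{b,c},{a}}
    (∀ ω, (beta1 (pmap p p (1 - 2 * p)) (emap ζ) (cls gbc ω) < νs ∧ mbc ω = 1) ∨
          (νs < beta1 (pmap p p (1 - 2 * p)) (emap ζ) (cls gbc ω) ∧ mbc ω = 0)) ∧
    -- both partitions in the support of λ are locally clustered
    LocallyClustered (pmap p p (1 - 2 * p)) (emap ζ) gac ∧
    LocallyClustered (pmap p p (1 - 2 * p)) (emap ζ) gbc := by
  have hp0 : 0 < p := by linarith
  have hζ0 : 0 ≤ ζ := by linarith
  have hζ1 : ζ ≤ 1 := by linarith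
  exact ⟨by simp [mac, mbc], isControlBestResponse_gac hp0 hp2 hζ0 hν_lo hν_hi,
    isControlBestResponse_gbc hp2 hζ1 hν_lo hν_hi, locallyClustered_gac hp0 hp2 hζlo.le hζ1,
    locallyClustered_gbc hp0 hp2 hζ0 hζhi.le⟩

/-- **Locally clustered distributional ABEE of the monitoring game** (Proposition 6),
for `p_a = p_b = p` with `1/3 < p < 1/2` (so `p_c = 1 - 2p`),
`(1-2p)/(1-p) < ν* < p/(1-p)`, and any `ζ` with `p < ζ < 1 - p`.

With `λ({{a,c},{b}}) = μ*` and `λ({{b,c},{a}}) = 1 - μ*`, the employer controlling the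
class containing `a` and not the class containing `b`, and the `c` worker choosing
`e = 0` with probability `ζ`: the aggregate control probability faced by type `c`
equals `μ*` (so any `ζ` is a worker best response), for each partition in the support
the employer's actions are best responses to the consistent expectations `β₁`, and both
partitions in the support are locally clustered with respect to the worker's behavior. -/
theorem monitoring_locally_clustered_distributional_ABEE
    (p : ℝ) (hp1 : 1 / 3 < p) (hp2 : p < 1 / 2)
    (μs νs : ℝ) (hμ0 : 0 < μs) (hμ1 : μs < 1)
    (hν_lo : (1 - 2 * p) / (1 - p) < νs) (hν_hi : νs < p / (1 - p))
    (ζ : ℝ) (hζlo : p < ζ) (hζhi : ζ < 1 - p) :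
    -- aggregate control probability faced by type c equals μ*
    (μs * mac Typ.c + (1 - μs) * mbc Typ.c = μs) ∧
    -- employer best responses under partition {{a,c},{b}}
    (∀ ω, (beta1 (pmap p p (1 - 2 * p)) (emap ζ) (cls gac ω) < νs ∧ mac ω = 1) ∨
          (νs < beta1 (pmap p p (1 - 2 * p)) (emap ζ) (cls gac ω) ∧ mac ω = 0)) ∧
    -- employer best responses under partition {{b,c},{a}}
    (∀ ω, (beta1 (pmap p p (1 - 2 * p)) (emap ζ) (cls gbc ω) < νs ∧ mbc ω = 1) ∨
          (νs < beta1 (pmap p p (1 - 2 * p)) (emap ζ) (cls gbc ω) ∧ mbc ω = 0)) ∧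
    -- both partitions in the support of λ are locally clustered
    LocallyClustered (pmap p p (1 - 2 * p)) (emap ζ) gac ∧
    LocallyClustered (pmap p p (1 - 2 * p)) (emap ζ) gbc :=
  monitoring_locally_clustered_distributional_ABEE_general p hp1 hp2 μs νs hν_lo hν_hi ζ hζlo hζhi
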